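/- arXiv:2207.11811 — 4 statements merged into one kernel-verified Lean document; each statement's English description precedes it below -/
import Mathlib

section
/- For every even integer n greater than four, the 3-uniform hypergraph based on the cycle C_n is minimal non-metric: it is not metric, but every proper induced subhypergraph of it is metric. -/
universe u

/-- A function `d` is a metric (distance function) on `α`. -/
structure IsMetric {α : Type*} (d : α → α → ℝ) : Prop where
  eq_iff : ∀ x y, d x y = 0 ↔ x = y
  symm : ∀ x y, d x y = d y x
  triangle : ∀ x y z, d x z ≤ d x y + d y z

/-- `[u v w]`: the points are pairwise distinct and `v` lies between `u` and `w`. -/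
def MBtw {α : Type*} (d : α → α → ℝ) (u v w : α) : Prop :=
  u ≠ v ∧ u ≠ w ∧ v ≠ w ∧ d u v + d v w = d u w

/-- The hyperedge set `E_M` associated with a metric space: all triples
`{x,y,z}` such that one of the three points is between the other two. -/
def metricEdges {α : Type*} (d : α → α → ℝ) : Set (Set α) :=
  {s | ∃ u v w : α, s = {u, v, w} ∧ MBtw d u v w}

/-- A 3-uniform hypergraph (given by its hyperedge set on vertex type `V`)
is metric if there is a metric space on ground set `V` with `E = E_M`. -/
def IsMetricHypergraph {V : Type*} (E : Set (Set V)) : Prop :=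
  ∃ d : V → V → ℝ, IsMetric d ∧ E = metricEdges d

/-- The hypergraph based on a graph `G`: the vertex set is `V ∪ {x}` (here
`Option V`, with `none` playing the role of the extra point `x`); the
hyperedges are all three-point subsets of `V` together with all sets
`{x,u,v}` with `{u,v}` an edge of `G`. -/
def basedOn {V : Type*} (G : SimpleGraph V) : Set (Set (Option V)) :=
  {s | (∃ u v w : V, u ≠ v ∧ u ≠ w ∧ v ≠ w ∧ s = {some u, some v, some w}) ∨
       (∃ u v : V, G.Adj u v ∧ s = {none, some u, some v})}

/-- The hyperedge set of the subhypergraph induced on `U`. -/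
def inducedEdges {V : Type*} (E : Set (Set V)) (U : Set V) : Set (Set U) :=
  {s | Subtype.val '' s ∈ E}

/-- The line `L_M(xy)` determined by two points of a metric space. -/
def lineOf {α : Type*} (d : α → α → ℝ) (x y : α) : Set α :=
  {x, y} ∪ {z | ({x, y, z} : Set α) ∈ metricEdges d}

/-- `e` is a two-point set forming an edge of `G`. -/
def IsEdgePair {V : Type*} (G : SimpleGraph V) (e : Set V) : Prop :=
  ∃ u v : V, G.Adj u v ∧ e = {u, v}

/-- The equivalence relation `≡_G`: two pairs are equivalent iff both are
edges of `G` or both are non-edges of `G`. -/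
def graphEquiv {V : Type*} (G : SimpleGraph V) (e f : Set V) : Prop :=
  (IsEdgePair G e ∧ IsEdgePair G f) ∨ (¬ IsEdgePair G e ∧ ¬ IsEdgePair G f)

/-- A relation `r` on two-point subsets of `V` is an obstacle if no metric
space on a superset `W` of `V` has `L_M(ab) = L_M(cd) ↔ {a,b} r {c,d}`
for all two-point subsets `{a,b}`, `{c,d}` of `V`. -/
def IsObstacle {V : Type u} (r : Set V → Set V → Prop) : Prop :=
  ¬ ∃ (W : Type u) (f : V ↪ W) (d : W → W → ℝ), IsMetric d ∧
      ∀ a b c e : V, a ≠ b → c ≠ e →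
        (lineOf d (f a) (f b) = lineOf d (f c) (f e) ↔ r {a, b} {c, e})

/-- The restriction of a relation on two-point subsets of `V` to the
two-point subsets of `U ⊆ V`. -/
def restrictRel {V : Type*} (r : Set V → Set V → Prop) (U : Set V) :
    Set U → Set U → Prop :=
  fun e f => r (Subtype.val '' e) (Subtype.val '' f)

/-!
If a metric `d` realised the hypergraph based on `C_n`, all triples of vertices of `C_n` would be
collinear, so (there being at least five of them) they embed isometrically in `ℝ` via some `f`.
With `a i = d(x, i)`, the triangle inequality makes the intervals `[f i - a i, f i + a i]`
pairwise intersecting, distinct and non-nested, and `{x, i, j}` is collinear exactly when the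
intervals of `i` and `j` share an endpoint. As `C_n` is triangle-free and 2-regular, every endpoint
value is then shared by exactly two intervals. A value that is both a left and a right endpoint
must be the least right endpoint, so there is at most one; without one, the two leftmost intervals
produce a nested pair. So there is exactly one, and counting left endpoints shows that `n` is odd.

Conversely, deleting a vertex `i₀` leaves the path `C_n - i₀`: put its vertices in order on a line
and `x` far away, at distance `n` and `n + 1` alternately, which the sup metric of `ℝ²` realises.
Deleting `x` leaves a complete hypergraph, realised by the same points.
-/

open Function

namespace IsMetric

variable {α β : Type*} {d : α → α → ℝ}

lemma self (hm : IsMetric d) (x : α) : d x x = 0 := (hm.eq_iff x x).2 rfl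

lemma nonneg (hm : IsMetric d) (x y : α) : 0 ≤ d x y := by
  have h := hm.triangle x y x
  rw [hm.self, hm.symm y x] at h
  linarith

lemma pos (hm : IsMetric d) {x y : α} (h : x ≠ y) : 0 < d x y :=
  (hm.nonneg x y).lt_of_ne fun h' => h ((hm.eq_iff x y).1 h'.symm)

lemma comp (hm : IsMetric d) {g : β → α} (hg : Injective g) :
    IsMetric fun a b => d (g a) (g b) where
  eq_iff _ _ := (hm.eq_iff _ _).trans hg.eq_iff
  symm _ _ := hm.symm _ _
  triangle _ _ _ := hm.triangle _ _ _

end IsMetric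

lemma isMetric_dist_comp {α E : Type*} [MetricSpace E] {g : α → E} (hg : Injective g) :
    IsMetric fun a b => dist (g a) (g b) where
  eq_iff _ _ := dist_eq_zero.trans hg.eq_iff
  symm _ _ := dist_comm _ _
  triangle _ _ _ := dist_triangle _ _ _

lemma mem_metricEdges_iff {α : Type*} {d : α → α → ℝ} (hm : IsMetric d) {x y z : α}
    (hxy : x ≠ y) (hxz : x ≠ z) (hyz : y ≠ z) :
    ({x, y, z} : Set α) ∈ metricEdges d ↔
      d x y + d y z = d x z ∨ d y x + d x z = d y z ∨ d x z + d z y = d x y := by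
  constructor
  · rintro ⟨u, v, w, hs, huv, huw, hvw, h⟩
    have mem : ∀ t ∈ ({u, v, w} : Set α), t = x ∨ t = y ∨ t = z := by
      intro t ht; rw [← hs] at ht; simpa using ht
    have := hm.symm x y; have := hm.symm x z; have := hm.symm y z
    rcases mem u (by simp) with rfl | rfl | rfl <;> rcases mem v (by simp) with rfl | rfl | rfl <;>
      rcases mem w (by simp) with rfl | rfl | rfl <;>
      first
        | exact (huv rfl).elim
        | exact (huw rfl).elim
        | exact (hvw rfl).elim
        | (left; linarith)
        | (right; left; linarith)
        | (right; right; linarith)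
  · rintro (h | h | h)
    · exact ⟨x, y, z, rfl, hxy, hxz, hyz, h⟩
    · exact ⟨y, x, z, Set.insert_comm _ _ _, hxy.symm, hyz, hxz, h⟩
    · exact ⟨x, z, y, by rw [Set.pair_comm], hxz, hxy, hyz.symm, h⟩

lemma image_mem_metricEdges_iff {α β : Type*} {d : α → α → ℝ} {g : β → α}
    (hg : Injective g) {s : Set β} :
    g '' s ∈ metricEdges d ↔ s ∈ metricEdges fun a b => d (g a) (g b) := by
  constructor
  · rintro ⟨u, v, w, hs, huv, huw, hvw, h⟩
    have mem : ∀ t ∈ ({u, v, w} : Set α), ∃ a ∈ s, g a = t := fun t ht => by rwa [← hs] at ht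
    obtain ⟨a, -, rfl⟩ := mem u (by simp)
    obtain ⟨b, -, rfl⟩ := mem v (by simp)
    obtain ⟨c, -, rfl⟩ := mem w (by simp)
    refine ⟨a, b, c, ?_, hg.ne_iff.1 huv, hg.ne_iff.1 huw, hg.ne_iff.1 hvw, h⟩
    ext t
    rw [← hg.mem_set_image, hs]
    simp [hg.eq_iff]
  · rintro ⟨a, b, c, rfl, hab, hac, hbc, h⟩
    exact ⟨g a, g b, g c, by simp [Set.image_insert_eq], hg.ne hab, hg.ne hac, hg.ne hbc, h⟩

lemma abs_sub_collinear (x y z : ℝ) :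
    |x - y| + |y - z| = |x - z| ∨ |y - x| + |x - z| = |y - z| ∨ |x - z| + |z - y| = |x - y| := by
  rcases le_total x y with h₁ | h₁ <;> rcases le_total y z with h₂ | h₂ <;>
    rcases le_total x z with h₃ | h₃ <;>
    simp only [abs_of_nonneg, abs_of_nonpos, sub_nonneg, sub_nonpos, *] <;>
    first
      | (left; linarith)
      | (right; left; linarith)
      | (right; right; linarith)

section LineEmbedding

variable {α : Type*} {d : α → α → ℝ}

lemma IsMetric.eq_abs_sub_or_eq_add (hm : IsMetric d)
    (hcol : ∀ x y z, x ≠ y → x ≠ z → y ≠ z → ({x, y, z} : Set α) ∈ metricEdges d)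
    (b u v : α) : d u v = |d b u - d b v| ∨ d u v = d b u + d b v := by
  by_cases hbu : b = u
  · subst hbu; left; rw [hm.self, zero_sub, abs_neg, abs_of_nonneg (hm.nonneg _ _)]
  by_cases hbv : b = v
  · subst hbv; left; rw [hm.self, sub_zero, abs_of_nonneg (hm.nonneg _ _), hm.symm]
  by_cases huv : u = v
  · subst huv; left; simp [hm.self]
  have := hm.symm b u; have := hm.symm v u; have := hm.nonneg u v
  rcases (mem_metricEdges_iff hm hbu hbv huv).1 (hcol b u v hbu hbv huv) with h | h | h
  · left; rw [abs_of_nonpos (by linarith)]; linarith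
  · right; linarith
  · left; rw [abs_of_nonneg (by linarith)]; linarith

lemma IsMetric.add_eq_of_le_of_le (hm : IsMetric d) {u v w : α} (huv : u ≠ v) (hwu : w ≠ u)
    (hwv : w ≠ v) (hs : ({u, w, v} : Set α) ∈ metricEdges d) (hu : d u w ≤ d u v)
    (hv : d w v ≤ d u v) : d u w + d w v = d u v := by
  have := hm.pos hwu; have := hm.pos hwv.symm; have := hm.symm u w; have := hm.symm v w
  rcases (mem_metricEdges_iff hm hwu.symm huv hwv).1 hs with h | h | h
  · exact h
  · linarith
  · linarith

lemma IsMetric.add_eq_of_forall_le (hm : IsMetric d)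
    (hcol : ∀ x y z, x ≠ y → x ≠ z → y ≠ z → ({x, y, z} : Set α) ∈ metricEdges d)
    {p q : α} (hpq : p ≠ q) (hmax : ∀ x y, d x y ≤ d p q) (w : α) :
    d p w + d w q = d p q := by
  by_cases hwp : w = p
  · subst hwp; rw [hm.self, zero_add]
  by_cases hwq : w = q
  · subst hwq; rw [hm.self, add_zero]
  exact hm.add_eq_of_le_of_le hpq hwp hwq (hcol p w q (Ne.symm hwp) hpq hwq) (hmax p w) (hmax w q)

lemma IsMetric.eq_abs_sub_or_diam (hm : IsMetric d)
    (hcol : ∀ x y z, x ≠ y → x ≠ z → y ≠ z → ({x, y, z} : Set α) ∈ metricEdges d)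
    {p q : α} (hpq : p ≠ q) (hmax : ∀ x y, d x y ≤ d p q) (u v : α) :
    d u v = |d p u - d p v| ∨ (d u v = d p q ∧ d p u + d p v = d p q) := by
  have hq : ∀ w, d q w = d p q - d p w := fun w => by
    rw [hm.symm q w]; linarith [hm.add_eq_of_forall_le hcol hpq hmax w]
  rcases hm.eq_abs_sub_or_eq_add hcol p u v with h | hp
  · exact Or.inl h
  rcases hm.eq_abs_sub_or_eq_add hcol q u v with h | h
  · left; rw [h, hq, hq, abs_sub_comm]; ring_nf
  · right; rw [hq, hq] at h; constructor <;> linarith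

lemma abs_sub_eq_add_of_abs_sub_add_abs_sub {a b c : ℝ} (h : |a - c| + |c - b| = a + b) :
    |a - b| = a + b ∨ c = 0 ∨ c = a + b := by
  rcases abs_cases (a - c) with ⟨h₁, s₁⟩ | ⟨h₁, s₁⟩ <;>
    rcases abs_cases (c - b) with ⟨h₂, s₂⟩ | ⟨h₂, s₂⟩ <;> rw [h₁, h₂] at h
  · left; rw [abs_of_nonneg (by linarith)]; linarith
  · right; left; linarith
  · right; right; linarith
  · left; rw [abs_of_nonpos (by linarith)]; linarith

theorem IsMetric.exists_eq_abs_sub [Fintype α] (hm : IsMetric d)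
    (hcol : ∀ x y z, x ≠ y → x ≠ z → y ≠ z → ({x, y, z} : Set α) ∈ metricEdges d)
    (hcard : 5 ≤ Fintype.card α) : ∃ f : α → ℝ, ∀ x y, d x y = |f x - f y| := by
  classical
  obtain ⟨x₀, y₀, hxy₀⟩ := Fintype.exists_pair_of_one_lt_card (α := α) (by omega)
  have : Nonempty α := ⟨x₀⟩
  obtain ⟨⟨p, q⟩, hpq⟩ := Finite.exists_max fun x : α × α => d x.1 x.2
  have hmax : ∀ x y, d x y ≤ d p q := fun x y => hpq (x, y)
  have hpq : p ≠ q := by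
    rintro rfl
    exact (hm.pos hxy₀).not_ge ((hmax x₀ y₀).trans (hm.self p).le)
  refine ⟨d p, fun u v => ?_⟩
  rcases hm.eq_abs_sub_or_diam hcol hpq hmax u v with h | ⟨huv, hsum⟩
  · exact h
  have huv' : u ≠ v := fun h => by subst h; linarith [hm.self u, hm.pos hpq]
  -- a fifth point `w` lies between `u` and `v`, which forces `{u, v} = {p, q}`
  obtain ⟨w, -, hw⟩ := Finset.exists_mem_notMem_of_card_lt_card
    (s := {p, q, u, v}) (t := Finset.univ) (Finset.card_le_four.trans_lt hcard)
  simp only [Finset.mem_insert, Finset.mem_singleton, not_or] at hw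
  obtain ⟨hwp, hwq, hwu, hwv⟩ := hw
  have hbtw := hm.add_eq_of_le_of_le huv' hwu hwv (hcol u w v (Ne.symm hwu) huv' hwv)
    (huv ▸ hmax u w) (huv ▸ hmax w v)
  have hwv' := hm.pos hwv; have hwu' := hm.pos (Ne.symm hwu)
  have h₁ : d u w = |d p u - d p w| := (hm.eq_abs_sub_or_diam hcol hpq hmax u w).resolve_right
    fun h => by linarith [h.1]
  have h₂ : d w v = |d p w - d p v| := (hm.eq_abs_sub_or_diam hcol hpq hmax w v).resolve_right
    fun h => by linarith [h.1]
  rw [h₁, h₂, huv, ← hsum] at hbtw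
  rcases abs_sub_eq_add_of_abs_sub_add_abs_sub hbtw with h | h | h
  · rw [huv, ← hsum, h]
  · exact absurd ((hm.eq_iff p w).1 h).symm hwp
  · have := hm.add_eq_of_forall_le hcol hpq hmax w
    exact absurd ((hm.eq_iff w q).1 (by linarith)) hwq

end LineEmbedding

section IntervalFamily

variable {ι : Type*} {ℓ r : ι → ℝ}

def IsEndpoint (ℓ r : ι → ℝ) (i : ι) (v : ℝ) : Prop := ℓ i = v ∨ r i = v

/-- A pairwise intersecting family of distinct nondegenerate intervals `[ℓ i, r i]`,
none strictly inside another. -/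
structure IsProperIntersecting (ℓ r : ι → ℝ) : Prop where
  lt : ∀ i, ℓ i < r i
  le : ∀ i j, ℓ i ≤ r j
  mono : ∀ i j, ℓ i < ℓ j → r i ≤ r j
  inj : ∀ i j, ℓ i = ℓ j → r i = r j → i = j

structure EndpointsPaired (ℓ r : ι → ℝ) : Prop where
  shared : ∀ i v, IsEndpoint ℓ r i v → ∃ j ≠ i, IsEndpoint ℓ r j v
  at_most_two : ∀ v i j k, IsEndpoint ℓ r i v → IsEndpoint ℓ r j v → IsEndpoint ℓ r k v →
    i = j ∨ i = k ∨ j = k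

lemma EndpointsPaired.of_adj_iff [Fintype ι] [DecidableEq ι] {G : SimpleGraph ι}
    [DecidableRel G.Adj]
    (hadj : ∀ i j, i ≠ j → (G.Adj i j ↔ ∃ v, IsEndpoint ℓ r i v ∧ IsEndpoint ℓ r j v))
    (hG : G.CliqueFree 3) (hdeg : ∀ i, 2 ≤ G.degree i) : EndpointsPaired ℓ r := by
  have triangle : ∀ {a b c}, G.Adj a b → G.Adj a c → G.Adj b c → False := fun hab hac hbc =>
    hG {_, _, _} (SimpleGraph.is3Clique_triple_iff.2 ⟨hab, hac, hbc⟩)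
  refine ⟨fun i v hiv => ?_, fun v i j k hi hj hk => ?_⟩
  · obtain ⟨j, hj, k, hk, hjk⟩ := Finset.one_lt_card.1 (hdeg i)
    rw [SimpleGraph.mem_neighborFinset] at hj hk
    obtain ⟨vj, hij, hjj⟩ := (hadj i j hj.ne).1 hj
    obtain ⟨vk, hik, hkk⟩ := (hadj i k hk.ne).1 hk
    have hv : vj ≠ vk := by
      rintro rfl; exact triangle hj hk ((hadj j k hjk).2 ⟨vj, hjj, hkk⟩)
    by_cases hvj : v = vj
    · exact ⟨j, hj.ne', hvj ▸ hjj⟩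
    by_cases hvk : v = vk
    · exact ⟨k, hk.ne', hvk ▸ hkk⟩
    rcases hij with rfl | rfl <;> rcases hik with rfl | rfl <;> rcases hiv with rfl | rfl
    all_goals first | exact (hv rfl).elim | exact (hvj rfl).elim | exact (hvk rfl).elim
  · by_contra! h
    exact triangle ((hadj i j h.1).2 ⟨v, hi, hj⟩) ((hadj i k h.2.1).2 ⟨v, hi, hk⟩)
      ((hadj j k h.2.2).2 ⟨v, hj, hk⟩)

namespace IsProperIntersecting

open Finset

/-- A touching value `r i = ℓ j` is at most every right endpoint, hence the least one. -/
lemma touch_eq (hI : IsProperIntersecting ℓ r) {i j i' j' : ι} (h : r i = ℓ j)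
    (h' : r i' = ℓ j') : r i = r i' :=
  le_antisymm (h ▸ hI.le j i') (h' ▸ hI.le j' i)

lemma exists_touch [Finite ι] [Nonempty ι] (hI : IsProperIntersecting ℓ r)
    (hP : EndpointsPaired ℓ r) : ∃ i j, r i = ℓ j := by
  by_contra! htouch
  obtain ⟨a, ha⟩ := Finite.exists_min ℓ
  obtain ⟨b, hba, hb⟩ := hP.shared a (ℓ a) (Or.inl rfl)
  replace hb : ℓ b = ℓ a := hb.resolve_right (htouch b a)
  -- the right endpoint of the shorter of the two leftmost intervals is shared with an interval
  -- starting further right, which then lies strictly inside the longer one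
  have key : ∀ a b, ℓ a = ℓ b → (∀ k, ℓ a ≤ ℓ k) → a ≠ b → r a < r b → False := by
    intro a b hab ha hne hr
    obtain ⟨c, hca, hc⟩ := hP.shared a (r a) (Or.inr rfl)
    replace hc : r c = r a := hc.resolve_left (htouch a c).symm
    have hcb : c ≠ b := by rintro rfl; exact hr.ne hc.symm
    have hlc : ℓ a < ℓ c := (ha c).lt_of_ne fun h => by
      rcases hP.at_most_two (ℓ a) a b c (Or.inl rfl) (Or.inl hab.symm) (Or.inl h.symm)
        with h | h | h
      exacts [hne h, hca h.symm, hcb h.symm]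
    linarith [hI.mono b c (hab ▸ hlc)]
  rcases lt_or_gt_of_ne fun h => hba (hI.inj b a hb h) with h | h
  · exact key b a hb (fun k => hb ▸ ha k) hba h
  · exact key a b hb.symm ha hba.symm h

lemma card_filter_eq [Fintype ι] [DecidableEq ι] (hI : IsProperIntersecting ℓ r)
    (hP : EndpointsPaired ℓ r) {i₀ j₀ : ι} (h₀ : r i₀ = ℓ j₀) (i : ι) :
    #{k | ℓ k = ℓ i} = if ℓ i = ℓ j₀ then 1 else 2 := by
  split_ifs with hi
  · rw [card_eq_one]
    refine ⟨j₀, ext fun k => ?_⟩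
    simp only [mem_filter, mem_univ, true_and, mem_singleton, hi]
    refine ⟨fun hk => ?_, fun hk => hk ▸ rfl⟩
    rcases hP.at_most_two (ℓ j₀) i₀ j₀ k (Or.inr h₀) (Or.inl rfl) (Or.inl hk) with h | h | h
    · subst h; exact absurd h₀ (hI.lt i₀).ne'
    · subst h; exact absurd (hk.trans h₀.symm) (hI.lt _).ne
    · exact h.symm
  · obtain ⟨j, hji, hj⟩ := hP.shared i (ℓ i) (Or.inl rfl)
    replace hj : ℓ j = ℓ i := hj.resolve_right fun h => hi (by rw [← h, hI.touch_eq h h₀, h₀])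
    rw [card_eq_two]
    refine ⟨i, j, hji.symm, ext fun k => ?_⟩
    simp only [mem_filter, mem_univ, true_and, mem_insert, mem_singleton]
    refine ⟨fun hk => ?_, by rintro (rfl | rfl) <;> simp [hj]⟩
    rcases hP.at_most_two (ℓ i) i j k (Or.inl rfl) (Or.inl hj) (Or.inl hk) with h | h | h
    exacts [absurd h.symm hji, Or.inl h.symm, Or.inr h.symm]

theorem odd_card [Fintype ι] [Nonempty ι] (hI : IsProperIntersecting ℓ r)
    (hP : EndpointsPaired ℓ r) : Odd (Fintype.card ι) := by
  classical
  obtain ⟨i₀, j₀, h₀⟩ := hI.exists_touch hP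
  have hfib : ∀ v ∈ univ.image ℓ, #{k | ℓ k = v} = if v = ℓ j₀ then 1 else 2 := by
    simp only [mem_image, mem_univ, true_and, forall_exists_index, forall_apply_eq_imp_iff]
    exact hI.card_filter_eq hP h₀
  rw [← card_univ, card_eq_sum_card_image ℓ, sum_congr rfl hfib,
    ← add_sum_erase _ _ (mem_image_of_mem ℓ (mem_univ j₀)), if_pos rfl,
    sum_congr rfl fun v hv => if_neg (ne_of_mem_erase hv), sum_const, smul_eq_mul]
  exact ⟨_, by ring⟩

end IsProperIntersecting

end IntervalFamily

section Balls
variable {ι : Type*} {f a : ι → ℝ}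

lemma isProperIntersecting_sub_add (ha : ∀ i, 0 < a i) (hf : Injective f)
    (hle : ∀ i j, |a i - a j| ≤ |f i - f j|) (hge : ∀ i j, |f i - f j| ≤ a i + a j) :
    IsProperIntersecting (f - a) (f + a) where
  lt i := by simp only [Pi.sub_apply, Pi.add_apply]; linarith [ha i]
  le i j := by simp only [Pi.sub_apply, Pi.add_apply]; linarith [le_abs_self (f i - f j), hge i j]
  mono i j h := by
    simp only [Pi.sub_apply, Pi.add_apply] at h ⊢
    have := hle i j
    rcases abs_cases (a i - a j) with ⟨h₁, s₁⟩ | ⟨h₁, s₁⟩ <;>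
      rcases abs_cases (f i - f j) with ⟨h₂, s₂⟩ | ⟨h₂, s₂⟩ <;> linarith
  inj i j h h' := hf (by simp only [Pi.sub_apply, Pi.add_apply] at h h'; linarith)

lemma exists_isEndpoint_sub_add_iff {i j : ι} (hi : 0 ≤ a i) (hj : 0 ≤ a j) :
    (∃ v, IsEndpoint (f - a) (f + a) i v ∧ IsEndpoint (f - a) (f + a) j v) ↔
      a i + |f i - f j| = a j ∨ a i + a j = |f i - f j| ∨ a j + |f j - f i| = a i := by
  have : (∃ v, IsEndpoint (f - a) (f + a) i v ∧ IsEndpoint (f - a) (f + a) j v) ↔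
      f i - a i = f j - a j ∨ f i - a i = f j + a j ∨ f i + a i = f j - a j ∨
        f i + a i = f j + a j := by
    simp only [IsEndpoint, Pi.sub_apply, Pi.add_apply]
    constructor
    · rintro ⟨v, rfl | rfl, h | h⟩ <;> simp [h]
    · rintro (h | h | h | h)
      exacts [⟨_, Or.inl rfl, Or.inl h.symm⟩, ⟨_, Or.inl rfl, Or.inr h.symm⟩,
        ⟨_, Or.inr rfl, Or.inl h.symm⟩, ⟨_, Or.inr rfl, Or.inr h.symm⟩]
  rw [this, abs_sub_comm (f j)]
  rcases abs_cases (f i - f j) with ⟨h, s⟩ | ⟨h, s⟩ <;> rw [h] <;> constructor <;> intro h <;> grind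

end Balls

section BasedOn
variable {V : Type*} (G : SimpleGraph V)

lemma some_triple_mem_basedOn {u v w : V} (huv : u ≠ v) (huw : u ≠ w) (hvw : v ≠ w) :
    ({some u, some v, some w} : Set (Option V)) ∈ basedOn G :=
  Or.inl ⟨u, v, w, huv, huw, hvw, rfl⟩

lemma none_triple_mem_basedOn_iff {u v : V} (huv : u ≠ v) :
    ({none, some u, some v} : Set (Option V)) ∈ basedOn G ↔ G.Adj u v := by
  refine ⟨?_, fun h => Or.inr ⟨u, v, h, rfl⟩⟩
  rintro (⟨a, b, c, -, -, -, hs⟩ | ⟨a, b, hab, hs⟩)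
  · have : none ∈ ({some a, some b, some c} : Set (Option V)) := hs ▸ Set.mem_insert _ _
    simp at this
  · have hu : some u ∈ ({none, some a, some b} : Set (Option V)) := hs ▸ by simp
    have hv : some v ∈ ({none, some a, some b} : Set (Option V)) := hs ▸ by simp
    simp only [Set.mem_insert_iff, Set.mem_singleton_iff, reduceCtorEq, Option.some.injEq,
      false_or] at hu hv
    rcases hu with rfl | rfl <;> rcases hv with rfl | rfl
    exacts [absurd rfl huv, hab, hab.symm, absurd rfl huv]

/-- A metric realisation of the hypergraph based on `G` places `V` on a line and `x` at
distances `a`, so `G` is the endpoint-sharing graph of the intervals `[f i - a i, f i + a i]`. -/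
theorem exists_isProperIntersecting_of_isMetricHypergraph [Fintype V]
    (hV : 5 ≤ Fintype.card V) (h : IsMetricHypergraph (basedOn G)) :
    ∃ ℓ r : V → ℝ, IsProperIntersecting ℓ r ∧
      ∀ i j, i ≠ j → (G.Adj i j ↔ ∃ v, IsEndpoint ℓ r i v ∧ IsEndpoint ℓ r j v) := by
  obtain ⟨d, hm, hE⟩ := h
  have hsome := Option.some_injective V
  obtain ⟨f, hf⟩ := (hm.comp hsome).exists_eq_abs_sub (fun i j k hij hik hjk => by
    rw [← image_mem_metricEdges_iff hsome, Set.image_insert_eq, Set.image_pair, ← hE]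
    exact some_triple_mem_basedOn G hij hik hjk) hV
  set a : V → ℝ := fun i => d none (some i)
  have ha : ∀ i, 0 < a i := fun i => hm.pos (Option.some_ne_none i).symm
  have hd : ∀ i j, d (some i) (some j) = |f i - f j| := hf
  refine ⟨f - a, f + a, isProperIntersecting_sub_add ha (fun i j h => ?_) (fun i j => ?_)
    (fun i j => ?_), fun i j hij => ?_⟩
  · exact hsome ((hm.eq_iff _ _).1 (by rw [hd, h, sub_self, abs_zero]))
  · rw [← hd, abs_sub_le_iff]
    have := hm.triangle none (some i) (some j); have := hm.triangle none (some j) (some i)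
    have := hm.symm (some i) (some j)
    constructor <;> linarith
  · rw [← hd, show a i = d (some i) none from hm.symm _ _]
    exact hm.triangle _ _ _
  · rw [← none_triple_mem_basedOn_iff G hij, hE,
      mem_metricEdges_iff hm (Option.some_ne_none i).symm (Option.some_ne_none j).symm
        (hsome.ne hij), exists_isEndpoint_sub_add_iff (ha i).le (ha j).le, hd, hd,
      hm.symm (some i) none]

end BasedOn

lemma Fin.val_sub_eq_one_iff {n : ℕ} (hn : 2 ≤ n) {a b : Fin n} :
    (a - b).val = 1 ↔ a.val = b.val + 1 ∨ (a.val = 0 ∧ b.val + 1 = n) := by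
  have := a.isLt; have := b.isLt
  rcases le_or_gt b a with h | h
  · rw [Fin.coe_sub_iff_le.2 h]; rw [Fin.le_def] at h; omega
  · rw [Fin.coe_sub_iff_lt.2 h]; rw [Fin.lt_def] at h; omega

namespace SimpleGraph

lemma cycleGraph_adj_iff_val {n : ℕ} (hn : 2 ≤ n) {u v : Fin n} :
    (cycleGraph n).Adj u v ↔ u.val = v.val + 1 ∨ v.val = u.val + 1 ∨
      (u.val = 0 ∧ v.val + 1 = n) ∨ (v.val = 0 ∧ u.val + 1 = n) := by
  rw [cycleGraph_adj', Fin.val_sub_eq_one_iff hn, Fin.val_sub_eq_one_iff hn]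
  tauto

lemma cycleGraph_cliqueFree_three {n : ℕ} (hn : 4 ≤ n) : (cycleGraph n).CliqueFree 3 := by
  intro s hs
  obtain ⟨a, b, c, hab, hac, hbc, -⟩ := is3Clique_iff.1 hs
  rw [cycleGraph_adj_iff_val (by omega)] at hab hac hbc
  omega

lemma cycleGraph_degree {n : ℕ} (hn : 3 ≤ n) (v : Fin n) : (cycleGraph n).degree v = 2 := by
  obtain ⟨m, rfl⟩ := Nat.exists_eq_add_of_le' hn
  exact cycleGraph_degree_three_le

end SimpleGraph

theorem not_isMetricHypergraph_basedOn_cycleGraph {n : ℕ} (hn : Even n) (h5 : 5 ≤ n) :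
    ¬ IsMetricHypergraph (basedOn (SimpleGraph.cycleGraph n)) := fun h => by
  have : Nonempty (Fin n) := ⟨⟨0, by omega⟩⟩
  obtain ⟨ℓ, r, hI, hadj⟩ :=
    exists_isProperIntersecting_of_isMetricHypergraph _ (by rwa [Fintype.card_fin]) h
  have hodd := hI.odd_card (.of_adj_iff hadj (SimpleGraph.cycleGraph_cliqueFree_three (by omega))
    fun i => (SimpleGraph.cycleGraph_degree (by omega) i).ge)
  rw [Fintype.card_fin] at hodd
  exact Nat.not_even_iff_odd.2 hodd hn

lemma isMetricHypergraph_inducedEdges {α : Type*} {E : Set (Set α)} {U : Set α}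
    {d : α → α → ℝ} (hm : IsMetric d) (hE : ∀ s ⊆ U, s ∈ E ↔ s ∈ metricEdges d) :
    IsMetricHypergraph (inducedEdges E U) :=
  ⟨fun x y => d x y, hm.comp Subtype.val_injective, Set.ext fun s =>
    (hE _ (Subtype.coe_image_subset U s)).trans (image_mem_metricEdges_iff Subtype.val_injective)⟩

lemma mem_basedOn_iff_mem_metricEdges {V : Type*} (G : SimpleGraph V)
    {d : Option V → Option V → ℝ} (i₀ : V)
    (hsome : ∀ u v w, u ≠ v → u ≠ w → v ≠ w →
      ({some u, some v, some w} : Set (Option V)) ∈ metricEdges d)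
    (hnone : ∀ u v, u ≠ v → u ≠ i₀ → v ≠ i₀ →
      (({none, some u, some v} : Set (Option V)) ∈ metricEdges d ↔ G.Adj u v))
    {s : Set (Option V)} (hs : none ∉ s ∨ some i₀ ∉ s) : s ∈ basedOn G ↔ s ∈ metricEdges d := by
  have avoid : ∀ u v, some i₀ ∉ ({none, some u, some v} : Set (Option V)) → u ≠ i₀ ∧ v ≠ i₀ := by
    intro u v h; simp only [Set.mem_insert_iff, Set.mem_singleton_iff] at h; grind
  constructor
  · rintro (⟨u, v, w, huv, huw, hvw, rfl⟩ | ⟨u, v, huv, rfl⟩)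
    · exact hsome u v w huv huw hvw
    · obtain ⟨hu, hv⟩ := avoid u v (hs.resolve_left (by simp))
      exact (hnone u v huv.ne hu hv).2 huv
  · intro hmem
    obtain ⟨p, q, t, rfl, hpq, hpt, hqt, -⟩ := id hmem
    have key : ∀ u v, u ≠ v → ({none, some u, some v} : Set (Option V)) = {p, q, t} →
        {p, q, t} ∈ basedOn G := by
      intro u v huv h
      obtain ⟨hu, hv⟩ := avoid u v (h ▸ hs.resolve_left (by simp [← h]))
      rw [← h, none_triple_mem_basedOn_iff G huv]
      exact (hnone u v huv hu hv).1 (h ▸ hmem)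
    rcases p with _ | u <;> rcases q with _ | v <;> rcases t with _ | w
    · exact absurd rfl hpq
    · exact absurd rfl hpq
    · exact absurd rfl hpt
    · exact key v w (by simpa using hqt) rfl
    · exact absurd rfl hqt
    · exact key u w (by simpa using hpt) (Set.insert_comm _ _ _)
    · refine key u v (by simpa using hpq) ?_
      ext; simp only [Set.mem_insert_iff, Set.mem_singleton_iff]; tauto
    · exact some_triple_mem_basedOn G (by simpa using hpq) (by simpa using hpt) (by simpa using hqt)

lemma Int.abs_emod_two_sub_le (x y : ℤ) : |x % 2 - y % 2| ≤ |x - y| := by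
  rcases abs_cases (x - y) with ⟨h, _⟩ | ⟨h, _⟩ <;>
    rcases abs_cases (x % 2 - y % 2) with ⟨h', _⟩ | ⟨h', _⟩ <;> omega

lemma Int.add_emod_two_collinear_iff {n x y : ℤ} (hx : 0 ≤ x) (hy : 0 ≤ y) (hxn : x < n)
    (hyn : y < n) (hxy : x ≠ y) :
    (n + x % 2 + |x - y| = n + y % 2 ∨ n + x % 2 + (n + y % 2) = |x - y| ∨
      n + y % 2 + |y - x| = n + x % 2) ↔ x = y + 1 ∨ y = x + 1 := by
  rw [abs_sub_comm y]
  rcases abs_cases (x - y) with ⟨h, _⟩ | ⟨h, _⟩ <;> rw [h] <;> omega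

section CycleMinusVertex

open SimpleGraph

variable {n : ℕ}

def cyclePos (i₀ k : Fin n) : ℤ := (k - i₀).val

lemma cyclePos_nonneg (i₀ k : Fin n) : 0 ≤ cyclePos i₀ k := Int.natCast_nonneg _

lemma cyclePos_lt (i₀ k : Fin n) : cyclePos i₀ k < n := Int.ofNat_lt.2 (k - i₀).isLt

lemma cyclePos_injective [NeZero n] (i₀ : Fin n) : Injective (cyclePos i₀) :=
  fun _ _ h => sub_left_inj.1 (Fin.ext (Int.ofNat_inj.1 h))

lemma cycleGraph_adj_iff_cyclePos [NeZero n] (hn : 2 ≤ n) {i₀ u v : Fin n} (hu : u ≠ i₀)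
    (hv : v ≠ i₀) :
    (cycleGraph n).Adj u v ↔
      cyclePos i₀ u = cyclePos i₀ v + 1 ∨ cyclePos i₀ v = cyclePos i₀ u + 1 := by
  have hu' : (u - i₀).val ≠ 0 := fun h => hu (sub_eq_zero.1 (Fin.ext h))
  have hv' : (v - i₀).val ≠ 0 := fun h => hv (sub_eq_zero.1 (Fin.ext h))
  rw [cycleGraph_adj', ← sub_sub_sub_cancel_right u v i₀, ← sub_sub_sub_cancel_right v u i₀,
    Fin.val_sub_eq_one_iff hn, Fin.val_sub_eq_one_iff hn, cyclePos, cyclePos]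
  omega

/-- The vertices of the path `C_n - i₀` at their positions on a line, and `x` at sup-distance
`n` or `n + 1` from them, alternately. -/
def cyclePoint (i₀ : Fin n) : Option (Fin n) → ℝ × ℝ
  | none => (0, ((-n : ℤ) : ℝ))
  | some k => (cyclePos i₀ k, ((cyclePos i₀ k % 2 : ℤ) : ℝ))

lemma cyclePoint_injective [NeZero n] (i₀ : Fin n) : Injective (cyclePoint i₀) := by
  have hn := Nat.pos_of_neZero n
  rintro (_ | k) (_ | k') h <;> simp only [cyclePoint, Prod.mk.injEq, Int.cast_inj] at h
  · rfl
  · omega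
  · omega
  · exact congrArg some (cyclePos_injective i₀ h.1)

lemma dist_cyclePoint_some (i₀ u v : Fin n) :
    dist (cyclePoint i₀ (some u)) (cyclePoint i₀ (some v)) =
      ((|cyclePos i₀ u - cyclePos i₀ v| : ℤ) : ℝ) := by
  rw [Prod.dist_eq, Real.dist_eq, Real.dist_eq]
  simp only [cyclePoint]
  rw [← Int.cast_sub, ← Int.cast_abs, ← Int.cast_sub, ← Int.cast_abs, ← Int.cast_max,
    max_eq_left (Int.abs_emod_two_sub_le _ _)]

lemma dist_cyclePoint_none (i₀ u : Fin n) :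
    dist (cyclePoint i₀ none) (cyclePoint i₀ (some u)) = ((n + cyclePos i₀ u % 2 : ℤ) : ℝ) := by
  have := cyclePos_nonneg i₀ u; have := cyclePos_lt i₀ u
  rw [Prod.dist_eq, Real.dist_eq, Real.dist_eq]
  simp only [cyclePoint]
  rw [← Int.cast_zero, ← Int.cast_sub, ← Int.cast_abs, ← Int.cast_sub, ← Int.cast_abs,
    ← Int.cast_max, abs_of_nonpos (by omega), abs_of_nonpos (by omega), max_eq_right (by omega)]
  push_cast; ring

end CycleMinusVertex

open SimpleGraph in
theorem isMetricHypergraph_inducedEdges_basedOn_cycleGraph {n : ℕ} (hn : 2 ≤ n)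
    {U : Set (Option (Fin n))} (hU : U ≠ Set.univ) :
    IsMetricHypergraph (inducedEdges (basedOn (cycleGraph n)) U) := by
  have : NeZero n := ⟨by omega⟩
  obtain ⟨o, ho⟩ := (Set.ne_univ_iff_exists_notMem U).1 hU
  set i₀ : Fin n := o.getD 0
  have hU' : ∀ s ⊆ U, none ∉ s ∨ some i₀ ∉ s := by
    rcases o with _ | i <;> intro s hs
    exacts [Or.inl fun h => ho (hs h), Or.inr fun h => ho (hs h)]
  have hm := isMetric_dist_comp (cyclePoint_injective i₀)
  refine isMetricHypergraph_inducedEdges hm fun s hs =>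
    mem_basedOn_iff_mem_metricEdges _ i₀ (fun u v w huv huw hvw => ?_)
      (fun u v huv hu hv => ?_) (hU' s hs)
  · rw [mem_metricEdges_iff hm (by simpa) (by simpa) (by simpa)]
    simp only [dist_cyclePoint_some]
    exact_mod_cast abs_sub_collinear (cyclePos i₀ u : ℝ) (cyclePos i₀ v) (cyclePos i₀ w)
  · rw [mem_metricEdges_iff hm (Option.some_ne_none u).symm (Option.some_ne_none v).symm
      (by simpa), cycleGraph_adj_iff_cyclePos hn hu hv,
      dist_comm (cyclePoint i₀ (some u)) (cyclePoint i₀ none)]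
    simp only [dist_cyclePoint_none, dist_cyclePoint_some, ← Int.cast_add, Int.cast_inj]
    exact Int.add_emod_two_collinear_iff (cyclePos_nonneg i₀ u) (cyclePos_nonneg i₀ v)
      (cyclePos_lt i₀ u) (cyclePos_lt i₀ v) ((cyclePos_injective i₀).ne huv)

/-- For every even integer `n > 4`, the hypergraph based on the cycle `C_n`
is minimal non-metric. -/
theorem stmt_0 (n : ℕ) (hn : Even n) (h4 : 4 < n) :
    ¬ IsMetricHypergraph (basedOn (SimpleGraph.cycleGraph n)) ∧
    ∀ U : Set (Option (Fin n)), U ≠ Set.univ →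
      IsMetricHypergraph (inducedEdges (basedOn (SimpleGraph.cycleGraph n)) U) :=
  ⟨not_isMetricHypergraph_basedOn_cycleGraph hn h4,
    fun _ hU => isMetricHypergraph_inducedEdges_basedOn_cycleGraph (by omega) hU⟩
end

section
/- Let M be a metric space and let V be a subset of its ground set with |V| ≥ 5. If every three-point subset of V belongs to E_M, then the elements of V can be enumerated as 0, 1, ..., n−1 with n = |V| in such a way that [uvw] holds whenever 0 ≤ u < v < w < n. -/
universe u

/-!
Let `x, y ∈ V` realise the diameter of `V`. Every point of `V` lies between `x` and `y`, and
`d x` is a ruler on `V`: `d x u + d u v = d x v` whenever `d x u ≤ d x v`. The only way this can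
fail is `x` lying between two points `u, v`; then `u, v` realise the diameter too and `x, u, y, v`
form a rectangle with sides `d x u`, `d x v` and diagonals `d x y`, and a fifth point cannot lie on
both diagonals. Enumerating `V` by increasing distance from `x` gives the required order.
-/

open Finset

section

variable {X : Type*} {d : X → X → ℝ}

namespace IsMetric

theorem dist_self (hd : IsMetric d) (a : X) : d a a = 0 :=
  (hd.eq_iff a a).2 rfl

theorem dist_pos (hd : IsMetric d) {a b : X} (hab : a ≠ b) : 0 < d a b := by
  have hnonneg : 0 ≤ d a b := by linarith [hd.triangle a b a, hd.symm a b, hd.dist_self a]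
  exact hnonneg.lt_of_ne fun h => hab ((hd.eq_iff a b).1 h.symm)

theorem dist_add_dist_eq_of_mem_metricEdges (hd : IsMetric d) {x y z : X}
    (h : ({x, y, z} : Set X) ∈ metricEdges d) :
    d x y + d y z = d x z ∨ d y x + d x z = d y z ∨ d x z + d z y = d x y := by
  obtain ⟨u, v, w, hs, huv, huw, hvw, hbtw⟩ := h
  have hmem : ∀ p ∈ ({u, v, w} : Set X), p = x ∨ p = y ∨ p = z := by
    intro p hp
    rw [← hs] at hp
    simpa using hp
  have := hd.symm
  rcases hmem u (by simp) with rfl | rfl | rfl <;> rcases hmem v (by simp) with rfl | rfl | rfl <;>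
    rcases hmem w (by simp) with rfl | rfl | rfl <;> first | contradiction | grind

end IsMetric

def TriplesCollinear (d : X → X → ℝ) (V : Finset X) : Prop :=
  ∀ x y z : X, x ∈ V → y ∈ V → z ∈ V → x ≠ y → x ≠ z → y ≠ z →
    ({x, y, z} : Set X) ∈ metricEdges d

theorem Finset.exists_max_image₂ {β : Type*} [LinearOrder β] {V : Finset X} (f : X → X → β)
    (hV : V.Nonempty) :
    ∃ x ∈ V, ∃ y ∈ V, ∀ a ∈ V, ∀ b ∈ V, f a b ≤ f x y := by
  obtain ⟨p, hp, hmax⟩ := (V ×ˢ V).exists_max_image (fun q => f q.1 q.2) (hV.product hV)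
  exact ⟨p.1, (mem_product.1 hp).1, p.2, (mem_product.1 hp).2,
    fun a ha b hb => hmax (a, b) (mem_product.2 ⟨ha, hb⟩)⟩

namespace TriplesCollinear

variable {V : Finset X} {x y u v w : X}

theorem dist_add_dist_eq_of_forall_le (hd : IsMetric d) (hV : TriplesCollinear d V)
    (hx : x ∈ V) (hy : y ∈ V) (hmax : ∀ a ∈ V, ∀ b ∈ V, d a b ≤ d x y) {z : X} (hz : z ∈ V) :
    d x z + d z y = d x y := by
  by_cases hzx : z = x
  · simp [hzx, hd.dist_self]
  by_cases hzy : z = y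
  · simp [hzy, hd.dist_self]
  have hxy : x ≠ y := by
    rintro rfl
    linarith [hmax x hx z hz, hd.dist_pos (Ne.symm hzx), hd.dist_self x]
  rcases hd.dist_add_dist_eq_of_mem_metricEdges (hV x z y hx hz hy (Ne.symm hzx) hxy hzy)
    with h | h | h
  · exact h
  · linarith [hmax z hz y hy, hd.dist_pos hzx]
  · linarith [hmax x hx z hz, hd.dist_pos (Ne.symm hzy)]

theorem dist_add_dist_eq_diam_of_mbtw (hd : IsMetric d) (hV : TriplesCollinear d V)
    (hx : x ∈ V) (hy : y ∈ V) (hmax : ∀ a ∈ V, ∀ b ∈ V, d a b ≤ d x y) (hu : u ∈ V) (hv : v ∈ V)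
    (huy : u ≠ y) (hvy : v ≠ y) (hbtw : MBtw d u x v) :
    d x u + d x v = d x y := by
  obtain ⟨hux, huv, hxv, h⟩ := hbtw
  have hu' := hV.dist_add_dist_eq_of_forall_le hd hx hy hmax hu
  have hv' := hV.dist_add_dist_eq_of_forall_le hd hx hy hmax hv
  have := hd.symm u x
  rcases hd.dist_add_dist_eq_of_mem_metricEdges (hV u v y hu hv hy huv huy hvy) with h' | h' | h'
  · linarith [hd.dist_pos hux]
  · linarith [hd.dist_pos hxv, hd.symm v u]
  · linarith [hd.symm y v]

theorem not_mbtw_of_mem_of_notMem (hd : IsMetric d) (hV : TriplesCollinear d V)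
    (hx : x ∈ V) (hy : y ∈ V) (hmax : ∀ a ∈ V, ∀ b ∈ V, d a b ≤ d x y) (hu : u ∈ V) (hv : v ∈ V)
    (huy : u ≠ y) (hvy : v ≠ y) (hw : w ∈ V) (hw' : w ∉ ({x, y, u, v} : Set X)) :
    ¬ MBtw d u x v := by
  intro hbtw
  have hsum := hV.dist_add_dist_eq_diam_of_mbtw hd hx hy hmax hu hv huy hvy hbtw
  obtain ⟨hux, huv, hxv, h⟩ := hbtw
  simp only [Set.mem_insert_iff, Set.mem_singleton_iff, not_or] at hw'
  obtain ⟨hwx, hwy, hwu, hwv⟩ := hw'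
  have hmax' : ∀ a ∈ V, ∀ b ∈ V, d a b ≤ d u v := by
    intro a ha b hb
    linarith [hmax a ha b hb, hd.symm u x]
  have huxy := hV.dist_add_dist_eq_of_forall_le hd hx hy hmax hu
  have hvxy := hV.dist_add_dist_eq_of_forall_le hd hx hy hmax hv
  have hwxy := hV.dist_add_dist_eq_of_forall_le hd hx hy hmax hw
  have hwuv := hV.dist_add_dist_eq_of_forall_le hd hu hv hmax' hw
  have E1 := hd.dist_add_dist_eq_of_mem_metricEdges
    (hV x u w hx hu hw (Ne.symm hux) (Ne.symm hwx) (Ne.symm hwu))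
  have E2 := hd.dist_add_dist_eq_of_mem_metricEdges
    (hV x v w hx hv hw hxv (Ne.symm hwx) (Ne.symm hwv))
  have E3 := hd.dist_add_dist_eq_of_mem_metricEdges
    (hV y u w hy hu hw (Ne.symm huy) (Ne.symm hwy) (Ne.symm hwu))
  have E4 := hd.dist_add_dist_eq_of_mem_metricEdges
    (hV y v w hy hv hw (Ne.symm hvy) (Ne.symm hwy) (Ne.symm hwv))
  have := hd.symm v x; have := hd.symm w x; have := hd.symm y u; have := hd.symm y v
  have := hd.symm y w; have := hd.symm w u; have := hd.symm w v; have := hd.symm u x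
  -- With `p = d x w`, `q = d u w` and `a = d x u`, the triples `{x, u, w}` and `{y, v, w}` leave
  -- `|p - q| = a`, `p + q = a` or `p + q = 2 * d x y - a`; `{x, v, w}` and `{y, u, w}` exclude
  -- the first, and the other two contradict each other since `a < d x y`.
  rcases E1 with e1 | e1 | e1 <;> rcases E2 with e2 | e2 | e2 <;>
    rcases E3 with e3 | e3 | e3 <;> rcases E4 with e4 | e4 | e4 <;>
    linarith [hd.dist_pos hwx, hd.dist_pos hwy, hd.dist_pos hwu, hd.dist_pos hwv,
      hd.dist_pos hux, hd.dist_pos hxv]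

theorem dist_add_dist_eq_of_dist_le (hd : IsMetric d) (hV : TriplesCollinear d V)
    (hcard : 5 ≤ V.card) (hx : x ∈ V) (hy : y ∈ V) (hmax : ∀ a ∈ V, ∀ b ∈ V, d a b ≤ d x y)
    (hu : u ∈ V) (hv : v ∈ V) (hle : d x u ≤ d x v) :
    d x u + d u v = d x v := by
  by_cases hux : u = x
  · simp [hux, hd.dist_self]
  by_cases hvx : v = x
  · linarith [hvx ▸ hle, hd.dist_pos (Ne.symm hux), hd.dist_self x]
  by_cases huv : u = v
  · simp [huv, hd.dist_self]
  by_cases hvy : v = y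
  · exact hvy ▸ hV.dist_add_dist_eq_of_forall_le hd hx hy hmax hu
  by_cases huy : u = y
  · subst huy
    linarith [hmax x hx v hv, hV.dist_add_dist_eq_of_forall_le hd hx hu hmax hv, hd.symm u v]
  rcases hd.dist_add_dist_eq_of_mem_metricEdges
      (hV x u v hx hu hv (Ne.symm hux) (Ne.symm hvx) huv) with h | h | h
  · exact h
  · classical
    obtain ⟨w, hw, hw'⟩ := exists_mem_notMem_of_card_lt_card
      ((card_le_four : ({x, y, u, v} : Finset X).card ≤ 4).trans_lt hcard)
    refine absurd ⟨hux, huv, Ne.symm hvx, h⟩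
      (hV.not_mbtw_of_mem_of_notMem hd hx hy hmax hu hv huy hvy hw ?_)
    simpa using hw'
  · linarith [hd.dist_pos huv, hd.symm v u]

end TriplesCollinear

theorem Finset.exists_equiv_fin_strictMono {β : Type*} [LinearOrder β] (V : Finset X)
    (f : X → β) (hf : Set.InjOn f V) :
    ∃ e : Fin V.card ≃ V, StrictMono fun i => f (e i) := by
  let : LinearOrder V :=
    LinearOrder.lift' (fun z : V => f z) fun a b h => Subtype.ext (hf a.2 b.2 h)
  let e := monoEquivOfFin V (Fintype.card_coe V)
  exact ⟨e.toEquiv, e.strictMono⟩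

section Ruler

variable {V : Finset X} {x : X}

theorem injOn_dist_of_dist_add_dist_eq (hd : IsMetric d)
    (hline : ∀ u ∈ V, ∀ v ∈ V, d x u ≤ d x v → d x u + d u v = d x v) :
    Set.InjOn (d x) V := by
  intro u hu v hv huv
  exact (hd.eq_iff u v).1 (by linarith [hline u hu v hv huv.le])

theorem mbtw_of_dist_lt_of_dist_lt
    (hline : ∀ u ∈ V, ∀ v ∈ V, d x u ≤ d x v → d x u + d u v = d x v) {u v w : X}
    (hu : u ∈ V) (hv : v ∈ V) (hw : w ∈ V) (huv : d x u < d x v) (hvw : d x v < d x w) :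
    MBtw d u v w := by
  refine ⟨?_, ?_, ?_, ?_⟩
  · rintro rfl; exact huv.ne rfl
  · rintro rfl; exact (huv.trans hvw).ne rfl
  · rintro rfl; exact hvw.ne rfl
  · linarith [hline u hu v hv huv.le, hline v hv w hw hvw.le, hline u hu w hw (huv.trans hvw).le]

end Ruler

end

/-- If `V` is a subset of a metric space with `|V| ≥ 5` all of whose
three-point subsets belong to `E_M`, then the elements of `V` can be
enumerated as `0, …, n-1` so that `[uvw]` whenever `u < v < w`. -/
theorem stmt_5 {X : Type*} (d : X → X → ℝ) (hd : IsMetric d) (V : Finset X)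
    (hcard : 5 ≤ V.card)
    (h : ∀ x y z : X, x ∈ V → y ∈ V → z ∈ V → x ≠ y → x ≠ z → y ≠ z →
        ({x, y, z} : Set X) ∈ metricEdges d) :
    ∃ e : Fin V.card ≃ {x // x ∈ V},
      ∀ u v w : Fin V.card, u < v → v < w →
        MBtw d ((e u : { x // x ∈ V}) : X) ((e v : { x // x ∈ V}) : X)
          ((e w : { x // x ∈ V}) : X) := by
  obtain ⟨x, hx, y, hy, hmax⟩ := V.exists_max_image₂ d (card_pos.1 (by omega))
  have hline : ∀ u ∈ V, ∀ v ∈ V, d x u ≤ d x v → d x u + d u v = d x v :=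
    fun u hu v hv => TriplesCollinear.dist_add_dist_eq_of_dist_le hd h hcard hx hy hmax hu hv
  obtain ⟨e, he⟩ := V.exists_equiv_fin_strictMono (d x) (injOn_dist_of_dist_add_dist_eq hd hline)
  exact ⟨e, fun u v w huv hvw =>
    mbtw_of_dist_lt_of_dist_lt hline (e u).2 (e v).2 (e w).2 (he huv) (he hvw)⟩
end

section
/- Let M be a metric space on ground set V ∪ {x}, where x ∉ V and V = {0,1,...,n−1}, and assume [uvw] holds whenever 0 ≤ u < v < w < n. Set D1 = {(j,ℓ) : j < ℓ and [x j ℓ]}, D2 = {(j,ℓ) : j < ℓ and [j x ℓ]}, D3 = {(j,ℓ) : j < ℓ and [j ℓ x]}. Then: (1) (j,ℓ) ∈ D1 and j < k < ℓ imply (j,k) ∈ D1 and (k,ℓ) ∈ D1; (2) (j,ℓ) ∈ D3 and j < k < ℓ imply (j,k) ∈ D3 and (k,ℓ) ∈ D3; (3) (j,ℓ) ∈ D2 and i < j < ℓ imply (i,j) ∈ D3 and (i,ℓ) ∈ D2; (4) (j,ℓ) ∈ D2 and j < ℓ < m imply (j,m) ∈ D2 and (ℓ,m) ∈ D1; (5)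 (i,j) ∈ D1 and (j,k) ∈ D1 imply (i,k) ∈ D1; (6) (i,j) ∈ D3 and (j,k) ∈ D3 imply (i,k) ∈ D3; (7) (i,k) ∈ D2 and (j,k) ∈ D1 imply (i,j) ∈ D2 or (j,i) ∈ D2; (8) (i,k) ∈ D2 and (i,j) ∈ D3 imply (j,k) ∈ D2 or (k,j) ∈ D2. -/
/-!
Every clause is an instance of the four-point transitivity laws of metric betweenness,
`[w x z] ∧ [x y z] → [w x y] ∧ [w y z]` and its mirror image, which follow from the triangle
inequality being forced to hold with equality. The linear placement of `V` supplies the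
betweenness among the points of `V` that clauses (1)–(4) need.
-/

universe u

/-- `D1 = {(j,ℓ) : j < ℓ and [x j ℓ]}` with `x = none`. -/
def Done {n : ℕ} (d : Option (Fin n) → Option (Fin n) → ℝ) : Set (Fin n × Fin n) :=
  {p | p.1 < p.2 ∧ MBtw d none (some p.1) (some p.2)}

/-- `D2 = {(j,ℓ) : j < ℓ and [j x ℓ]}` with `x = none`. -/
def Dtwo {n : ℕ} (d : Option (Fin n) → Option (Fin n) → ℝ) : Set (Fin n × Fin n) :=
  {p | p.1 < p.2 ∧ MBtw d (some p.1) none (some p.2)}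

/-- `D3 = {(j,ℓ) : j < ℓ and [j ℓ x]}` with `x = none`. -/
def Dthree {n : ℕ} (d : Option (Fin n) → Option (Fin n) → ℝ) : Set (Fin n × Fin n) :=
  {p | p.1 < p.2 ∧ MBtw d (some p.1) (some p.2) none}

namespace MBtw

variable {α : Type*} {d : α → α → ℝ} {w x y z : α}

theorem symm (hd : IsMetric d) (h : MBtw d x y z) : MBtw d z y x := by
  obtain ⟨hxy, hxz, hyz, hsum⟩ := h
  refine ⟨hyz.symm, hxz.symm, hxy.symm, ?_⟩
  rw [hd.symm z y, hd.symm y x, hd.symm z x]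
  linarith

theorem not_swap (hd : IsMetric d) (h : MBtw d w x z) : ¬ MBtw d x w z := by
  intro h'
  have hwx : d w x = 0 := by linarith [h.2.2.2, h'.2.2.2, hd.symm x w]
  exact h.1 ((hd.eq_iff w x).mp hwx)

theorem trans_right_left (hd : IsMetric d) (h₁ : MBtw d w x z) (h₂ : MBtw d x y z) :
    MBtw d w x y := by
  refine ⟨h₁.1, ?_, h₂.1, ?_⟩
  · rintro rfl
    exact h₁.not_swap hd h₂
  · linarith [h₁.2.2.2, h₂.2.2.2, hd.triangle w x y, hd.triangle w y z]

theorem trans_right (hd : IsMetric d) (h₁ : MBtw d w x z) (h₂ : MBtw d x y z) :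
    MBtw d w y z := by
  refine ⟨(h₁.trans_right_left hd h₂).2.1, h₁.2.1, h₂.2.2.1, ?_⟩
  linarith [h₁.2.2.2, h₂.2.2.2, hd.triangle w x y, hd.triangle w y z]

theorem trans_left (hd : IsMetric d) (h₁ : MBtw d w y z) (h₂ : MBtw d w x y) :
    MBtw d w x z :=
  ((h₁.symm hd).trans_right hd (h₂.symm hd)).symm hd

theorem trans_left_right (hd : IsMetric d) (h₁ : MBtw d w y z) (h₂ : MBtw d w x y) :
    MBtw d x y z :=
  ((h₁.symm hd).trans_right_left hd (h₂.symm hd)).symm hd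

end MBtw

theorem mem_Dtwo_or_swap_mem_Dtwo {n : ℕ} {d : Option (Fin n) → Option (Fin n) → ℝ}
    (hd : IsMetric d) {i j : Fin n} (h : MBtw d (some i) none (some j)) :
    (i, j) ∈ Dtwo d ∨ (j, i) ∈ Dtwo d := by
  rcases lt_or_gt_of_ne (fun hij => h.2.1 (congrArg some hij)) with hij | hji
  · exact Or.inl ⟨hij, h⟩
  · exact Or.inr ⟨hji, h.symm hd⟩

/-- Lemma on the structure of `D1, D2, D3` for a metric space on
`V ∪ {x}` with `V = {0, …, n-1}` linearly placed. -/
theorem stmt_6 (n : ℕ) (d : Option (Fin n) → Option (Fin n) → ℝ)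
    (hd : IsMetric d)
    (hlin : ∀ u v w : Fin n, u < v → v < w → MBtw d (some u) (some v) (some w)) :
    (∀ j k l : Fin n, (j, l) ∈ Done d → j < k → k < l →
        (j, k) ∈ Done d ∧ (k, l) ∈ Done d) ∧
    (∀ j k l : Fin n, (j, l) ∈ Dthree d → j < k → k < l →
        (j, k) ∈ Dthree d ∧ (k, l) ∈ Dthree d) ∧
    (∀ i j l : Fin n, (j, l) ∈ Dtwo d → i < j → j < l →
        (i, j) ∈ Dthree d ∧ (i, l) ∈ Dtwo d) ∧
    (∀ j l m : Fin n, (j, l) ∈ Dtwo d → j < l → l < m →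
        (j, m) ∈ Dtwo d ∧ (l, m) ∈ Done d) ∧
    (∀ i j k : Fin n, (i, j) ∈ Done d → (j, k) ∈ Done d → (i, k) ∈ Done d) ∧
    (∀ i j k : Fin n, (i, j) ∈ Dthree d → (j, k) ∈ Dthree d → (i, k) ∈ Dthree d) ∧
    (∀ i j k : Fin n, (i, k) ∈ Dtwo d → (j, k) ∈ Done d →
        (i, j) ∈ Dtwo d ∨ (j, i) ∈ Dtwo d) ∧
    (∀ i j k : Fin n, (i, k) ∈ Dtwo d → (i, j) ∈ Dthree d →
        (j, k) ∈ Dtwo d ∨ (k, j) ∈ Dtwo d) := by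
  refine ⟨?_, ?_, ?_, ?_, ?_, ?_, ?_, ?_⟩
  · rintro j k l ⟨-, hxjl⟩ hjk hkl
    have hjkl := hlin j k l hjk hkl
    exact ⟨⟨hjk, hxjl.trans_right_left hd hjkl⟩, ⟨hkl, hxjl.trans_right hd hjkl⟩⟩
  · rintro j k l ⟨-, hjlx⟩ hjk hkl
    have hjkl := hlin j k l hjk hkl
    exact ⟨⟨hjk, hjlx.trans_left hd hjkl⟩, ⟨hkl, hjlx.trans_left_right hd hjkl⟩⟩
  · rintro i j l ⟨hjl, hjxl⟩ hij -
    have hijl := hlin i j l hij hjl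
    exact ⟨⟨hij, hijl.trans_right_left hd hjxl⟩, ⟨hij.trans hjl, hijl.trans_right hd hjxl⟩⟩
  · rintro j l m ⟨-, hjxl⟩ hjl hlm
    have hjlm := hlin j l m hjl hlm
    exact ⟨⟨hjl.trans hlm, hjlm.trans_left hd hjxl⟩, ⟨hlm, hjlm.trans_left_right hd hjxl⟩⟩
  · rintro i j k ⟨hij, hxij⟩ ⟨hjk, hxjk⟩
    exact ⟨hij.trans hjk, hxjk.trans_left hd hxij⟩
  · rintro i j k ⟨hij, hijx⟩ ⟨hjk, hjkx⟩
    exact ⟨hij.trans hjk, hijx.trans_right hd hjkx⟩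
  · rintro i j k ⟨-, hixk⟩ ⟨-, hxjk⟩
    exact mem_Dtwo_or_swap_mem_Dtwo hd (hixk.trans_right_left hd hxjk)
  · rintro i j k ⟨-, hixk⟩ ⟨-, hijx⟩
    exact mem_Dtwo_or_swap_mem_Dtwo hd (hixk.trans_left_right hd hijx)
end

section
/- The 3-uniform hypergraph based on the complement of the path P_5 on five vertices is not metric. -/
universe u

/-!
Write `x` for the extra point `none`. For a non-edge `uv` of `G` no point of `{x, u, v}` lies
between the other two, while for an edge `uv`, and for any three points of `V`, one point does.
The four-point rule (`[a b c]` and `[a c e]` give `[a b e]` and `[b c e]`) turns this into local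
rules: if `x` lies between `u` and `w`, every non-neighbour of `u` lies between `u` and `w`;
if `w` lies beyond `u` as seen from `x`, it also lies beyond every non-neighbour of `u`
adjacent to `w`.

In `P₅ᶜ` the vertices `0, 3, 1, 4` form a 4-cycle whose diagonals `01` and `34` are non-edges.
These rules force `0` and `1` to lie between `x` and both of `3` and `4`, or the reverse; reversing
the path swaps the two cases. In the first case chasing betweenness through the triples of
`{0, …, 4}` ends with a triple having two different middle points.
-/

namespace MBtw

variable {α : Type*} {d : α → α → ℝ} {w x y z : α}

theorem not_swap_left (hd : IsMetric d) (h : MBtw d x y z) : ¬MBtw d y x z := fun h' =>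
  h.1 ((hd.eq_iff x y).1 (by linarith [h.2.2.2, h'.2.2.2, hd.symm x y]))

theorem not_swap_right (hd : IsMetric d) (h : MBtw d x y z) : ¬MBtw d x z y := fun h' =>
  h.2.2.1 ((hd.eq_iff y z).1 (by linarith [h.2.2.2, h'.2.2.2, hd.symm y z]))

theorem not_rotate (hd : IsMetric d) (h : MBtw d x y z) : ¬MBtw d z x y :=
  fun h' => h.not_swap_left hd (h'.symm hd)

/-- `d w z = d w x + d x y + d y z ≥ d w x + d x z ≥ d w z`, so both triangle inequalities
used are equalities. -/
theorem trans (hd : IsMetric d) (h₁ : MBtw d w y z) (h₂ : MBtw d w x y) :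
    MBtw d w x z ∧ MBtw d x y z := by
  obtain ⟨hwy, hwz, hyz, e₁⟩ := h₁
  obtain ⟨hwx, -, hxy, e₂⟩ := h₂
  have hxz : x ≠ z := by
    rintro rfl
    exact hxy ((hd.eq_iff x y).1 (by linarith [hd.symm x y]))
  have t₁ := hd.triangle w x z
  have t₂ := hd.triangle x y z
  exact ⟨⟨hwx, hwz, hxz, by linarith⟩, ⟨hxy, hxz, hyz, by linarith⟩⟩

end MBtw

theorem mem_metricEdges_iff_s8 {α : Type*} {d : α → α → ℝ} (hd : IsMetric d) {a b c : α} :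
    ({a, b, c} : Set α) ∈ metricEdges d ↔ MBtw d b a c ∨ MBtw d a b c ∨ MBtw d a c b := by
  constructor
  · rintro ⟨u, v, w, hs, huvw⟩
    have hu : u ∈ ({a, b, c} : Set α) := by rw [hs]; simp
    have hv : v ∈ ({a, b, c} : Set α) := by rw [hs]; simp
    have hw : w ∈ ({a, b, c} : Set α) := by rw [hs]; simp
    have hwvu := huvw.symm hd
    have ⟨huv, huw, hvw, _⟩ := huvw
    simp only [Set.mem_insert_iff, Set.mem_singleton_iff] at hu hv hw
    rcases hu with rfl | rfl | rfl <;> rcases hv with rfl | rfl | rfl <;>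
      rcases hw with rfl | rfl | rfl <;> tauto
  · rintro (h | h | h)
    · exact ⟨b, a, c, Set.insert_comm _ _ _, h⟩
    · exact ⟨a, b, c, rfl, h⟩
    · exact ⟨a, c, b, by rw [Set.pair_comm], h⟩

namespace SimpleGraph

def complPathGraphRev (n : ℕ) : (pathGraph n)ᶜ ↪g (pathGraph n)ᶜ where
  toEmbedding := Fin.revPerm.toEmbedding
  map_rel_iff' := by
    intro i j
    simp only [Equiv.coe_toEmbedding, Fin.revPerm_apply, compl_adj, pathGraph_adj, ne_eq,
      Fin.rev_inj, Fin.val_rev]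
    omega

end SimpleGraph

namespace basedOn

open SimpleGraph

variable {V : Type*} {G : SimpleGraph V} {d : Option V → Option V → ℝ}
  {u v w u₁ u₂ w₁ w₂ : V}

theorem mbtw_some_cases (hd : IsMetric d) (hE : basedOn G = metricEdges d)
    (huv : u ≠ v) (huw : u ≠ w) (hvw : v ≠ w) :
    MBtw d (some v) (some u) (some w) ∨ MBtw d (some u) (some v) (some w) ∨
      MBtw d (some u) (some w) (some v) :=
  (mem_metricEdges_iff_s8 hd).1 (hE ▸ Or.inl ⟨u, v, w, huv, huw, hvw, rfl⟩)

theorem mbtw_none_cases (hd : IsMetric d) (hE : basedOn G = metricEdges d) (h : G.Adj u v) :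
    MBtw d (some u) none (some v) ∨ MBtw d none (some u) (some v) ∨
      MBtw d none (some v) (some u) :=
  (mem_metricEdges_iff_s8 hd).1 (hE ▸ Or.inr ⟨u, v, h, rfl⟩)

theorem not_mem_metricEdges (hE : basedOn G = metricEdges d) (h : Gᶜ.Adj u v) :
    ({none, some u, some v} : Set (Option V)) ∉ metricEdges d := by
  rw [← hE]
  rintro (⟨u', v', w', -, -, -, hs⟩ | ⟨u', v', hadj, hs⟩)
  · have : none ∈ ({some u', some v', some w'} : Set (Option V)) := hs ▸ by simp
    simp at this
  · have hu' : some u' ∈ ({none, some u, some v} : Set (Option V)) := hs ▸ by simp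
    have hv' : some v' ∈ ({none, some u, some v} : Set (Option V)) := hs ▸ by simp
    simp only [Set.mem_insert_iff, Set.mem_singleton_iff, Option.some.injEq, reduceCtorEq,
      false_or] at hu' hv'
    rw [compl_adj] at h
    rcases hu' with rfl | rfl <;> rcases hv' with rfl | rfl
    exacts [hadj.ne rfl, h.2 hadj, h.2 hadj.symm, hadj.ne rfl]

theorem not_mbtw_none_left (hE : basedOn G = metricEdges d) (h : Gᶜ.Adj u v) :
    ¬MBtw d none (some u) (some v) :=
  fun hb => not_mem_metricEdges hE h ⟨none, some u, some v, rfl, hb⟩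

theorem not_mbtw_none_mid (hE : basedOn G = metricEdges d) (h : Gᶜ.Adj u v) :
    ¬MBtw d (some u) none (some v) :=
  fun hb => not_mem_metricEdges hE h ⟨some u, none, some v, Set.insert_comm _ _ _, hb⟩

theorem mbtw_of_mbtw_none_mid (hd : IsMetric d) (hE : basedOn G = metricEdges d)
    (h : MBtw d (some u) none (some w)) (huv : Gᶜ.Adj u v) :
    MBtw d (some u) (some v) (some w) := by
  obtain rfl | hvw := eq_or_ne v w
  · exact absurd h (not_mbtw_none_mid hE huv)
  have huw : u ≠ w := fun e => h.2.1 (congrArg some e)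
  rcases mbtw_some_cases hd hE huv.ne huw hvw with h' | h' | h'
  · exact absurd ((h'.symm hd).trans_left_right hd (h.symm hd)) (not_mbtw_none_left hE huv)
  · exact h'
  · exact absurd (h'.trans_left hd h) (not_mbtw_none_mid hE huv)

theorem mbtw_none_mid_of_mbtw (hd : IsMetric d) (hE : basedOn G = metricEdges d)
    (h : MBtw d (some u) (some v) (some w)) (huv : Gᶜ.Adj u v) (huw : G.Adj u w) :
    MBtw d (some u) none (some w) := by
  rcases mbtw_none_cases hd hE huw with h' | h' | h'
  · exact h'
  · exact absurd (((h'.symm hd).trans_left_right hd (h.symm hd)).symm hd)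
      (not_mbtw_none_left hE huv)
  · exact absurd (((h'.symm hd).trans_left hd h).symm hd) (not_mbtw_none_left hE huv.symm)

theorem mbtw_none_left_of_compl_adj (hd : IsMetric d) (hE : basedOn G = metricEdges d)
    (h : MBtw d none (some u) (some w)) (huv : Gᶜ.Adj u v) (hvw : G.Adj v w) :
    MBtw d none (some v) (some w) := by
  rcases mbtw_none_cases hd hE hvw with h' | h' | h'
  · exact absurd ((h'.symm hd).trans_left_right hd (h.symm hd)) (not_mbtw_none_mid hE huv)
  · exact h'
  · exact absurd (h'.trans_left hd h) (not_mbtw_none_left hE huv)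

theorem not_mbtw_none_mid_of_compl_adj (hd : IsMetric d) (hE : basedOn G = metricEdges d)
    (h : MBtw d (some u) none (some w)) (huv : Gᶜ.Adj u v) :
    ¬MBtw d (some v) none (some w) := fun h' =>
  (mbtw_of_mbtw_none_mid hd hE h huv).not_swap_left hd (mbtw_of_mbtw_none_mid hd hE h' huv.symm)

theorem mbtw_of_not_mbtw_none_mid (hd : IsMetric d) (hE : basedOn G = metricEdges d)
    (huv : Gᶜ.Adj u v) (huw : G.Adj u w) (hvw : G.Adj v w)
    (hu : ¬MBtw d (some u) none (some w)) (hv : ¬MBtw d (some v) none (some w)) :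
    MBtw d (some u) (some w) (some v) := by
  rcases mbtw_some_cases hd hE huw.ne huv.ne hvw.ne.symm with h | h | h
  · exact absurd (mbtw_none_mid_of_mbtw hd hE (h.symm hd) huv.symm hvw) hv
  · exact h
  · exact absurd (mbtw_none_mid_of_mbtw hd hE h huv huw) hu

theorem mbtw_none_of_square (hd : IsMetric d) (hE : basedOn G = metricEdges d)
    (hu : Gᶜ.Adj u₁ u₂) (hw : Gᶜ.Adj w₁ w₂) (h₁₁ : G.Adj u₁ w₁) (h₁₂ : G.Adj u₁ w₂)
    (h₂₁ : G.Adj u₂ w₁) (h₂₂ : G.Adj u₂ w₂) (h : MBtw d none (some u₁) (some w₁)) :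
    MBtw d none (some u₁) (some w₂) ∧ MBtw d none (some u₂) (some w₁) ∧
      MBtw d none (some u₂) (some w₂) := by
  have f₂₁ := mbtw_none_left_of_compl_adj hd hE h hu h₂₁
  have hn₁ : ¬MBtw d none (some w₂) (some u₁) := fun h' =>
    h.not_swap_right hd (mbtw_none_left_of_compl_adj hd hE h' hw.symm h₁₁.symm)
  have hn₂ : ¬MBtw d none (some w₂) (some u₂) := fun h' =>
    f₂₁.not_swap_right hd (mbtw_none_left_of_compl_adj hd hE h' hw.symm h₂₁.symm)
  rcases mbtw_none_cases hd hE h₁₂ with o₁₂ | f₁₂ | n₁₂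
  · rcases mbtw_none_cases hd hE h₂₂ with o₂₂ | f₂₂ | n₂₂
    · exact absurd o₂₂ (not_mbtw_none_mid_of_compl_adj hd hE o₁₂ hu)
    · exact absurd o₁₂ ((mbtw_none_left_of_compl_adj hd hE f₂₂ hu.symm h₁₂).not_swap_left hd)
    · exact absurd n₂₂ hn₂
  · exact ⟨f₁₂, f₂₁, mbtw_none_left_of_compl_adj hd hE f₁₂ hu h₂₂⟩
  · exact absurd n₁₂ hn₁

theorem mbtw_none_square_cases (hd : IsMetric d) (hE : basedOn G = metricEdges d)
    (hu : Gᶜ.Adj u₁ u₂) (hw : Gᶜ.Adj w₁ w₂) (h₁₁ : G.Adj u₁ w₁) (h₁₂ : G.Adj u₁ w₂)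
    (h₂₁ : G.Adj u₂ w₁) (h₂₂ : G.Adj u₂ w₂) :
    (MBtw d none (some u₁) (some w₁) ∧ MBtw d none (some u₁) (some w₂) ∧
        MBtw d none (some u₂) (some w₁) ∧ MBtw d none (some u₂) (some w₂)) ∨
      (MBtw d none (some w₁) (some u₁) ∧ MBtw d none (some w₂) (some u₁) ∧
        MBtw d none (some w₁) (some u₂) ∧ MBtw d none (some w₂) (some u₂)) := by
  rcases mbtw_none_cases hd hE h₁₁ with o₁₁ | f₁₁ | n₁₁
  · rcases mbtw_none_cases hd hE h₁₂ with o₁₂ | f₁₂ | n₁₂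
    · exact absurd (o₁₂.symm hd) (not_mbtw_none_mid_of_compl_adj hd hE (o₁₁.symm hd) hw)
    · obtain ⟨f₁₁, f₂₂, f₂₁⟩ :=
        mbtw_none_of_square hd hE hu hw.symm h₁₂ h₁₁ h₂₂ h₂₁ f₁₂
      exact Or.inl ⟨f₁₁, f₁₂, f₂₁, f₂₂⟩
    · obtain ⟨n₂₂, n₁₁, n₂₁⟩ :=
        mbtw_none_of_square hd hE hw.symm hu h₁₂.symm h₂₂.symm h₁₁.symm h₂₁.symm n₁₂
      exact Or.inr ⟨n₁₁, n₁₂, n₂₁, n₂₂⟩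
  · obtain ⟨f₁₂, f₂₁, f₂₂⟩ := mbtw_none_of_square hd hE hu hw h₁₁ h₁₂ h₂₁ h₂₂ f₁₁
    exact Or.inl ⟨f₁₁, f₁₂, f₂₁, f₂₂⟩
  · obtain ⟨n₂₁, n₁₂, n₂₂⟩ :=
      mbtw_none_of_square hd hE hw hu h₁₁.symm h₂₁.symm h₁₂.symm h₂₂.symm n₁₁
    exact Or.inr ⟨n₁₁, n₁₂, n₂₁, n₂₂⟩

theorem false_of_mbtw_none_square (hd : IsMetric d) (hE : basedOn G = metricEdges d)
    (f : (pathGraph 5)ᶜ ↪g G)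
    (h₀₃ : MBtw d none (some (f 0)) (some (f 3))) (h₀₄ : MBtw d none (some (f 0)) (some (f 4)))
    (h₁₃ : MBtw d none (some (f 1)) (some (f 3))) (h₁₄ : MBtw d none (some (f 1)) (some (f 4))) :
    False := by
  have adj (i j : Fin 5) (h : (pathGraph 5)ᶜ.Adj i j := by simp [pathGraph_adj]) :
      G.Adj (f i) (f j) := f.map_adj_iff.2 h
  have nadj (i j : Fin 5) (h : (pathGraph 5).Adj i j := by simp [pathGraph_adj]) :
      Gᶜ.Adj (f i) (f j) := (Embedding.complEquiv f).map_adj_iff.2 (by rwa [compl_compl])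
  have h₂₄ := mbtw_none_left_of_compl_adj hd hE h₁₄ (nadj 1 2) (adj 2 4)
  have h₀₄₁ := mbtw_of_not_mbtw_none_mid hd hE (nadj 0 1) (adj 0 4) (adj 1 4)
    (h₀₄.not_swap_left hd) (h₁₄.not_swap_left hd)
  have h₁₄₂ := mbtw_of_not_mbtw_none_mid hd hE (nadj 1 2) (adj 1 4) (adj 2 4)
    (h₁₄.not_swap_left hd) (h₂₄.not_swap_left hd)
  rcases mbtw_none_cases hd hE (adj 0 2) with h₀ₓ₂ | h₀₂ | h₂₀
  · have h₀₁₂ := mbtw_of_mbtw_none_mid hd hE h₀ₓ₂ (nadj 0 1)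
    exact h₁₄₂.not_swap_left hd (h₀₁₂.trans_left_right hd h₀₄₁)
  · have h₀₂₄ := h₂₄.trans_left_right hd h₀₂
    have h₃₀₄ := mbtw_of_not_mbtw_none_mid hd hE (nadj 3 4) (adj 3 0) (adj 4 0)
      (h₀₃.not_rotate hd) (h₀₄.not_rotate hd)
    have h₂₀₃ := mbtw_of_not_mbtw_none_mid hd hE (nadj 2 3) (adj 2 0) (adj 3 0)
      (h₀₂.not_rotate hd) (h₀₃.not_rotate hd)
    rcases mbtw_some_cases hd hE (f.injective.ne (by decide) : f 1 ≠ f 2)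
      (f.injective.ne (by decide) : f 1 ≠ f 3) (f.injective.ne (by decide) : f 2 ≠ f 3)
      with h₂₁₃ | h₁₂₃ | h₁₃₂
    · exact ((h₃₀₄.symm hd).trans_left hd (h₀₂₄.symm hd)).not_swap_left hd
        (h₂₁₃.trans_left hd (h₁₄₂.symm hd))
    · exact h₁₃.not_swap_left hd (mbtw_none_mid_of_mbtw hd hE h₁₂₃ (nadj 1 2) (adj 1 3))
    · exact (h₀₄₁.trans_left hd h₀₂₄).not_swap_left hd ((h₁₃₂.symm hd).trans_left hd h₂₀₃)
  · exact h₀₃.not_swap_right hd (mbtw_none_left_of_compl_adj hd hE h₂₀ (nadj 2 3) (adj 3 0))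

theorem not_isMetricHypergraph_of_embedding (f : (pathGraph 5)ᶜ ↪g G) :
    ¬IsMetricHypergraph (basedOn G) := by
  rintro ⟨d, hd, hE⟩
  have adj (i j : Fin 5) (h : (pathGraph 5)ᶜ.Adj i j := by simp [pathGraph_adj]) :
      G.Adj (f i) (f j) := f.map_adj_iff.2 h
  have nadj (i j : Fin 5) (h : (pathGraph 5).Adj i j := by simp [pathGraph_adj]) :
      Gᶜ.Adj (f i) (f j) := (Embedding.complEquiv f).map_adj_iff.2 (by rwa [compl_compl])
  rcases mbtw_none_square_cases hd hE (nadj 0 1) (nadj 3 4) (adj 0 3) (adj 0 4) (adj 1 3)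
    (adj 1 4) with ⟨h₀₃, h₀₄, h₁₃, h₁₄⟩ | ⟨h₃₀, h₄₀, h₃₁, h₄₁⟩
  · exact false_of_mbtw_none_square hd hE f h₀₃ h₀₄ h₁₃ h₁₄
  · exact false_of_mbtw_none_square hd hE (f.comp (complPathGraphRev 5)) h₄₁ h₄₀ h₃₁ h₃₀

end basedOn

/-- The hypergraph based on the complement of the path `P_5` is not metric. -/
theorem stmt_8 :
    ¬ IsMetricHypergraph (basedOn (SimpleGraph.pathGraph 5)ᶜ) :=
  basedOn.not_isMetricHypergraph_of_embedding SimpleGraph.Embedding.refl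
end
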